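/- Let X be a real Banach space, θ ∈ (0, 1/2), c > 0, C > 0, Φ∞ ∈ ℝ, t₀ ≥ 0, and ψ ∈ X. Let u : ℝ → X and Φ : ℝ → ℝ be continuously differentiable on [t₀, ∞), with Φ nonincreasing and Φ(t) > Φ∞ for all t ≥ t₀. Assume that for all t ≥ t₀: -Φ'(t) ≥ (c/θ)(Φ(t) - Φ∞)^{1-θ} ‖u'(t)‖ and -Φ'(t) ≥ C (Φ(t) - Φ∞)^{2(1-θ)}, and assume u(t) → ψ in X as t → ∞. Then there exists a constant C' > 0 such that ‖u(t) - ψ‖ ≤ C' (1 + t)^{-θ/(1-2θ)} for all t ≥ t₀. -/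

import Mathlib

open Filter Topology Set

/-!
Write `E = Φ - Φinf`. The dissipation inequality `C E^p ≤ -E'` with `p = 2(1-θ) > 1` makes
`E^(1-p)` grow at least linearly, so `E(t) ≲ (1+t)^(-1/(p-1))`. The Łojasiewicz inequality says
exactly that `‖u'‖ ≤ -(E^θ / c)'`, so the length of the trajectory after time `t`, and with it
`‖u(t) - ψ‖`, is at most `E(t)^θ / c`.
-/

section Decay

variable {E E' : ℝ → ℝ} {t₀ p C : ℝ}

theorem add_mul_sub_le_rpow_one_sub_of_mul_rpow_le_neg_deriv (hp : 1 < p)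
    (hpos : ∀ t ∈ Ici t₀, 0 < E t) (hE : ∀ t ∈ Ici t₀, HasDerivAt E (E' t) t)
    (hdiss : ∀ t ∈ Ici t₀, C * E t ^ p ≤ -E' t) {t : ℝ} (ht : t ∈ Ici t₀) :
    E t₀ ^ (1 - p) + (p - 1) * C * (t - t₀) ≤ E t ^ (1 - p) := by
  have hderiv : ∀ s ∈ Ici t₀,
      HasDerivAt (fun s => E s ^ (1 - p)) (E' s * (1 - p) * E s ^ (1 - p - 1)) s :=
    fun s hs => (hE s hs).rpow_const (Or.inl (hpos s hs).ne')
  have hrate : ∀ s ∈ Ici t₀, (p - 1) * C ≤ E' s * (1 - p) * E s ^ (1 - p - 1) := by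
    intro s hs
    have hEs := hpos s hs
    have hinv : E s ^ (1 - p - 1) * E s ^ p = 1 := by
      rw [← Real.rpow_add hEs, show 1 - p - 1 + p = 0 by ring, Real.rpow_zero]
    have hp' : 0 ≤ p - 1 := by linarith
    calc (p - 1) * C = (p - 1) * E s ^ (1 - p - 1) * (C * E s ^ p) := by
          rw [mul_assoc, mul_left_comm _ C, hinv, mul_one]
      _ ≤ (p - 1) * E s ^ (1 - p - 1) * (-E' s) := by gcongr; exact hdiss s hs
      _ = E' s * (1 - p) * E s ^ (1 - p - 1) := by ring
  have := (convex_Ici t₀).mul_sub_le_image_sub_of_le_deriv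
    (fun s hs => (hderiv s hs).continuousAt.continuousWithinAt)
    (fun s hs => (hderiv s (interior_subset hs)).differentiableAt.differentiableWithinAt)
    (fun s hs => (hderiv s (interior_subset hs)).deriv ▸ hrate s (interior_subset hs))
    t₀ self_mem_Ici t ht ht
  linarith

theorem exists_pos_mul_one_add_le_of_add_mul_le {f : ℝ → ℝ} {a k : ℝ} (ha : -1 < a)
    (hfa : 0 < f a) (hk : 0 < k) (hf : ∀ t ∈ Ici a, f a + k * (t - a) ≤ f t) :
    ∃ m > 0, ∀ t ∈ Ici a, m * (1 + t) ≤ f t := by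
  have ha' : 0 < 1 + a := by linarith
  refine ⟨min (f a / (1 + a)) k, lt_min (div_pos hfa ha') hk, fun t ht => ?_⟩
  have hstart : min (f a / (1 + a)) k * (1 + a) ≤ f a :=
    (le_div_iff₀ ha').1 (min_le_left _ _)
  have hslope : min (f a / (1 + a)) k * (t - a) ≤ k * (t - a) :=
    mul_le_mul_of_nonneg_right (min_le_right _ _) (sub_nonneg.2 ht)
  linarith [hf t ht]

theorem exists_le_mul_one_add_rpow_of_mul_rpow_le_neg_deriv (hp : 1 < p) (hC : 0 < C)
    (ht₀ : -1 < t₀) (hpos : ∀ t ∈ Ici t₀, 0 < E t) (hE : ∀ t ∈ Ici t₀, HasDerivAt E (E' t) t)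
    (hdiss : ∀ t ∈ Ici t₀, C * E t ^ p ≤ -E' t) :
    ∃ K > 0, ∀ t ∈ Ici t₀, E t ≤ K * (1 + t) ^ (-(p - 1)⁻¹) := by
  obtain ⟨m, hm, hgrowth⟩ := exists_pos_mul_one_add_le_of_add_mul_le (f := fun t => E t ^ (1 - p)) ht₀
    (Real.rpow_pos_of_pos (hpos t₀ self_mem_Ici) _) (mul_pos (by linarith) hC)
    fun t ht => add_mul_sub_le_rpow_one_sub_of_mul_rpow_le_neg_deriv hp hpos hE hdiss ht
  refine ⟨m ^ (-(p - 1)⁻¹), Real.rpow_pos_of_pos hm _, fun t ht => ?_⟩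
  have h1t : 0 < 1 + t := by linarith [mem_Ici.1 ht]
  have hp' : 0 < p - 1 := by linarith
  calc E t = (E t ^ (1 - p)) ^ (-(p - 1)⁻¹) := by
        rw [← Real.rpow_mul (hpos t ht).le,
          show (1 - p) * -(p - 1)⁻¹ = 1 by field_simp; ring, Real.rpow_one]
    _ ≤ (m * (1 + t)) ^ (-(p - 1)⁻¹) :=
        Real.rpow_le_rpow_of_nonpos (by positivity) (hgrowth t ht) (by simp [hp'.le])
    _ = m ^ (-(p - 1)⁻¹) * (1 + t) ^ (-(p - 1)⁻¹) := Real.mul_rpow hm.le h1t.le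

end Decay

section Length

variable {F : Type*} [NormedAddCommGroup F] [NormedSpace ℝ F] {f f' : ℝ → F} {g g' : ℝ → ℝ}

theorem norm_sub_le_sub_of_norm_deriv_le_neg_deriv {a b : ℝ} (hab : a ≤ b)
    (hf : ∀ x ∈ Icc a b, HasDerivAt f (f' x) x) (hg : ∀ x ∈ Icc a b, HasDerivAt g (g' x) x)
    (hbound : ∀ x ∈ Ico a b, ‖f' x‖ ≤ -g' x) :
    ‖f b - f a‖ ≤ g a - g b :=
  image_norm_le_of_norm_deriv_right_le_deriv_boundary' (f := fun x => f x - f a)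
    (B := fun x => g a - g x)
    (fun x hx => (hf x hx).continuousAt.continuousWithinAt.sub continuousWithinAt_const)
    (fun x hx => ((hf x (Ico_subset_Icc_self hx)).sub_const _).hasDerivWithinAt)
    (by simp)
    (fun x hx => continuousWithinAt_const.sub (hg x hx).continuousAt.continuousWithinAt)
    (fun x hx => ((hg x (Ico_subset_Icc_self hx)).const_sub _).hasDerivWithinAt)
    hbound ⟨hab, le_rfl⟩

theorem norm_sub_le_of_tendsto_of_norm_deriv_le_neg_deriv {a : ℝ} {ψ : F}
    (hlim : Tendsto f atTop (𝓝 ψ)) (hf : ∀ x ∈ Ici a, HasDerivAt f (f' x) x)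
    (hg : ∀ x ∈ Ici a, HasDerivAt g (g' x) x) (hg₀ : ∀ x ∈ Ici a, 0 ≤ g x)
    (hbound : ∀ x ∈ Ici a, ‖f' x‖ ≤ -g' x) :
    ‖f a - ψ‖ ≤ g a := by
  rw [norm_sub_rev]
  refine le_of_tendsto ((hlim.sub_const (f a)).norm) ?_
  filter_upwards [eventually_ge_atTop a] with b hb
  have hchord := norm_sub_le_sub_of_norm_deriv_le_neg_deriv hb
    (fun x hx => hf x hx.1) (fun x hx => hg x hx.1) (fun x hx => hbound x hx.1)
  linarith [hg₀ b hb]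

theorem norm_sub_le_rpow_of_lojasiewicz {ψ : F} {E E' : ℝ → ℝ} {θ c t₀ : ℝ}
    (hθ : 0 < θ) (hc : 0 < c) (hpos : ∀ t ∈ Ici t₀, 0 < E t)
    (hf : ∀ t ∈ Ici t₀, HasDerivAt f (f' t) t) (hE : ∀ t ∈ Ici t₀, HasDerivAt E (E' t) t)
    (hloj : ∀ t ∈ Ici t₀, c / θ * E t ^ (1 - θ) * ‖f' t‖ ≤ -E' t)
    (hlim : Tendsto f atTop (𝓝 ψ)) {t : ℝ} (ht : t ∈ Ici t₀) :
    ‖f t - ψ‖ ≤ c⁻¹ * E t ^ θ := by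
  have hsub : Ici t ⊆ Ici t₀ := Ici_subset_Ici.2 ht
  refine norm_sub_le_of_tendsto_of_norm_deriv_le_neg_deriv hlim (fun s hs => hf s (hsub hs))
    (fun s hs => ((hE s (hsub hs)).rpow_const (Or.inl (hpos s (hsub hs)).ne')).const_mul c⁻¹)
    (fun s hs => by have := hpos s (hsub hs); positivity) fun s hs => ?_
  have hEs := hpos s (hsub hs)
  have hinv : E s ^ (θ - 1) * E s ^ (1 - θ) = 1 := by
    rw [← Real.rpow_add hEs, show θ - 1 + (1 - θ) = 0 by ring, Real.rpow_zero]
  calc ‖f' s‖ = θ / c * E s ^ (θ - 1) * (c / θ * E s ^ (1 - θ) * ‖f' s‖) := by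
        rw [show θ / c * E s ^ (θ - 1) * (c / θ * E s ^ (1 - θ) * ‖f' s‖)
          = θ / c * (c / θ) * (E s ^ (θ - 1) * E s ^ (1 - θ)) * ‖f' s‖ by ring, hinv]
        field_simp
    _ ≤ θ / c * E s ^ (θ - 1) * -E' s := by gcongr; exact hloj s (hsub hs)
    _ = -(c⁻¹ * (E' s * θ * E s ^ (θ - 1))) := by ring

end Length

theorem lojasiewicz_simon_convergence_rate_general
    {X : Type*} [NormedAddCommGroup X] [NormedSpace ℝ X]
    (θ c C Φinf t₀ : ℝ) (hθ : θ ∈ Set.Ioo (0:ℝ) (1/2)) (hc : 0 < c) (hC : 0 < C)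
    (ht₀ : 0 ≤ t₀) (ψ : X) (u : ℝ → X) (u' : ℝ → X) (Φ Φ' : ℝ → ℝ)
    (hu : ∀ t ∈ Set.Ici t₀, HasDerivAt u (u' t) t)
    (hΦ : ∀ t ∈ Set.Ici t₀, HasDerivAt Φ (Φ' t) t)
    (hgt : ∀ t ∈ Set.Ici t₀, Φinf < Φ t)
    (h1 : ∀ t ∈ Set.Ici t₀, (c / θ) * (Φ t - Φinf) ^ (1 - θ) * ‖u' t‖ ≤ -Φ' t)
    (h2 : ∀ t ∈ Set.Ici t₀, C * (Φ t - Φinf) ^ (2 * (1 - θ)) ≤ -Φ' t)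
    (hconv : Tendsto u atTop (𝓝 ψ)) :
    ∃ C' : ℝ, 0 < C' ∧ ∀ t ∈ Set.Ici t₀,
      ‖u t - ψ‖ ≤ C' * (1 + t) ^ (-(θ / (1 - 2 * θ))) := by
  obtain ⟨hθ₀, hθ₁⟩ := hθ
  have hpos : ∀ t ∈ Ici t₀, 0 < Φ t - Φinf := fun t ht => sub_pos.2 (hgt t ht)
  have hE : ∀ t ∈ Ici t₀, HasDerivAt (fun s => Φ s - Φinf) (Φ' t) t :=
    fun t ht => (hΦ t ht).sub_const Φinf
  obtain ⟨K, hK, hdecay⟩ := exists_le_mul_one_add_rpow_of_mul_rpow_le_neg_deriv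
    (by linarith) hC (by linarith) hpos hE h2
  refine ⟨c⁻¹ * K ^ θ, by positivity, fun t ht => ?_⟩
  have h1t : 0 ≤ 1 + t := by linarith [mem_Ici.1 ht]
  calc ‖u t - ψ‖ ≤ c⁻¹ * (Φ t - Φinf) ^ θ :=
        norm_sub_le_rpow_of_lojasiewicz hθ₀ hc hpos hu hE h1 hconv ht
    _ ≤ c⁻¹ * (K * (1 + t) ^ (-(2 * (1 - θ) - 1)⁻¹)) ^ θ := by
        gcongr; exacts [(hpos t ht).le, hdecay t ht]
    _ = c⁻¹ * K ^ θ * (1 + t) ^ (-(θ / (1 - 2 * θ))) := by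
        rw [Real.mul_rpow hK.le (by positivity), ← Real.rpow_mul h1t,
          show -(2 * (1 - θ) - 1)⁻¹ * θ = -(θ / (1 - 2 * θ)) by ring, mul_assoc]

/-- Abstract convergence-rate scheme of Part II of Section 5: if
`Φ` is a nonincreasing `C¹` Lyapunov function on `[t₀,∞)` with `Φ(t) > Φinf`,
satisfying `-Φ'(t) ≥ (c/θ)(Φ(t)-Φinf)^{1-θ}‖u'(t)‖` and
`-Φ'(t) ≥ C(Φ(t)-Φinf)^{2(1-θ)}`, and `u(t) → ψ`, then
`‖u(t) - ψ‖ ≤ C'(1+t)^{-θ/(1-2θ)}` on `[t₀,∞)` for some `C' > 0`. -/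
theorem lojasiewicz_simon_convergence_rate
    {X : Type*} [NormedAddCommGroup X] [NormedSpace ℝ X] [CompleteSpace X]
    (θ c C Φinf t₀ : ℝ) (hθ : θ ∈ Set.Ioo (0:ℝ) (1/2)) (hc : 0 < c) (hC : 0 < C)
    (ht₀ : 0 ≤ t₀) (ψ : X) (u : ℝ → X) (u' : ℝ → X) (Φ Φ' : ℝ → ℝ)
    (hu : ∀ t ∈ Set.Ici t₀, HasDerivAt u (u' t) t)
    (hu' : ContinuousOn u' (Set.Ici t₀))
    (hΦ : ∀ t ∈ Set.Ici t₀, HasDerivAt Φ (Φ' t) t)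
    (hΦ' : ContinuousOn Φ' (Set.Ici t₀))
    (hmono : AntitoneOn Φ (Set.Ici t₀))
    (hgt : ∀ t ∈ Set.Ici t₀, Φinf < Φ t)
    (h1 : ∀ t ∈ Set.Ici t₀, (c / θ) * (Φ t - Φinf) ^ (1 - θ) * ‖u' t‖ ≤ -Φ' t)
    (h2 : ∀ t ∈ Set.Ici t₀, C * (Φ t - Φinf) ^ (2 * (1 - θ)) ≤ -Φ' t)
    (hconv : Tendsto u atTop (𝓝 ψ)) :
    ∃ C' : ℝ, 0 < C' ∧ ∀ t ∈ Set.Ici t₀,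
      ‖u t - ψ‖ ≤ C' * (1 + t) ^ (-(θ / (1 - 2 * θ))) :=
  lojasiewicz_simon_convergence_rate_general θ c C Φinf t₀ hθ hc hC ht₀ ψ u u' Φ Φ' hu hΦ hgt h1 h2
    hconv
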